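/- arXiv:2205.02733 — 2 statements merged into one kernel-verified Lean document; each statement's English description precedes it below -/
import Mathlib

section
/- For μ > 0 and y ∈ ℝⁿ, the unique minimizer of x ↦ (1/2)‖x - y‖₂² + μ‖x‖₂ over ℝⁿ is (y/‖y‖₂) · max(‖y‖₂ - μ, 0) if y ≠ 0, and 0 if y = 0 (block soft-thresholding). -/
open scoped Classical
open RealInnerProductSpace

/-- Block soft-thresholding: the proximal operator of `μ‖·‖₂`. -/
noncomputable def proxL2 {n : ℕ} (μ : ℝ) (y : EuclideanSpace ℝ (Fin n)) :
    EuclideanSpace ℝ (Fin n) :=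
  if y = 0 then 0 else (max (‖y‖ - μ) 0 / ‖y‖) • y

lemma proxL2_key {n : ℕ} (μ : ℝ) (hμ : 0 < μ) (y x : EuclideanSpace ℝ (Fin n)) :
    (1 / 2) * ‖proxL2 μ y - y‖ ^ 2 + μ * ‖proxL2 μ y‖ + (1 / 2) * ‖x - proxL2 μ y‖ ^ 2 ≤
      (1 / 2) * ‖x - y‖ ^ 2 + μ * ‖x‖ := by
  unfold proxL2
  by_cases hy : y = 0
  · simp [hy]
    nlinarith [norm_nonneg x, hμ.le, mul_nonneg hμ.le (norm_nonneg x)]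
  · rw [if_neg hy]
    have hr0 : 0 < ‖y‖ := norm_pos_iff.mpr hy
    have ht : (inner ℝ x y : ℝ) ≤ ‖x‖ * ‖y‖ := real_inner_le_norm x y
    have h1 : ‖x - y‖ ^ 2 = ‖x‖ ^ 2 - 2 * (inner ℝ x y : ℝ) + ‖y‖ ^ 2 := by
      rw [norm_sub_sq_real]
    by_cases hc : ‖y‖ ≤ μ
    · have hmax : max (‖y‖ - μ) 0 = 0 := max_eq_right (by linarith)
      rw [hmax]
      simp only [zero_div, zero_smul, zero_sub, norm_neg, norm_zero, mul_zero,
        add_zero, sub_zero]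
      rw [h1]
      nlinarith [mul_nonneg hμ.le (norm_nonneg x), norm_nonneg x,
        mul_le_mul_of_nonneg_left ht hμ.le]
    · push_neg at hc
      have hmax : max (‖y‖ - μ) 0 = ‖y‖ - μ := max_eq_left (by linarith)
      rw [hmax]
      set c : ℝ := (‖y‖ - μ) / ‖y‖ with hcdef
      have hcr : c * ‖y‖ = ‖y‖ - μ := div_mul_cancel₀ _ hr0.ne'
      have hc0 : 0 ≤ c := div_nonneg (by linarith) hr0.le
      have hc1 : c ≤ 1 := by
        rw [div_le_one hr0]; linarith
      have hn1 : ‖c • y‖ = c * ‖y‖ := by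
        rw [norm_smul, Real.norm_eq_abs, abs_of_nonneg hc0]
      have hn2 : ‖c • y - y‖ = (1 - c) * ‖y‖ := by
        have : c • y - y = (c - 1) • y := by rw [sub_smul, one_smul]
        rw [this, norm_smul, Real.norm_eq_abs, abs_of_nonpos (by linarith)]
        ring
      have hn3 : ‖x - c • y‖ ^ 2 = ‖x‖ ^ 2 - 2 * (c * (inner ℝ x y : ℝ)) + (c * ‖y‖) ^ 2 := by
        rw [norm_sub_sq_real, real_inner_smul_right, norm_smul, Real.norm_eq_abs,
          abs_of_nonneg hc0]
      rw [hn1, hn2, hn3, h1]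
      nlinarith [mul_le_mul_of_nonneg_left ht hμ.le, hcr, hr0, hμ,
        mul_le_mul_of_nonneg_left ht (mul_nonneg hc0 hμ.le)]

theorem stmt_7 {n : ℕ} (μ : ℝ) (hμ : 0 < μ) (y : EuclideanSpace ℝ (Fin n)) :
    (∀ x : EuclideanSpace ℝ (Fin n),
      (1 / 2) * ‖proxL2 μ y - y‖ ^ 2 + μ * ‖proxL2 μ y‖ ≤
        (1 / 2) * ‖x - y‖ ^ 2 + μ * ‖x‖) ∧
    (∀ x : EuclideanSpace ℝ (Fin n),
      (1 / 2) * ‖x - y‖ ^ 2 + μ * ‖x‖ =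
        (1 / 2) * ‖proxL2 μ y - y‖ ^ 2 + μ * ‖proxL2 μ y‖ →
      x = proxL2 μ y) := by
  constructor
  · intro x
    have := proxL2_key μ hμ y x
    nlinarith [sq_nonneg ‖x - proxL2 μ y‖]
  · intro x hx
    have hk := proxL2_key μ hμ y x
    have h0 : ‖x - proxL2 μ y‖ ^ 2 ≤ 0 := by linarith
    have h1 : ‖x - proxL2 μ y‖ = 0 := by
      nlinarith [sq_nonneg ‖x - proxL2 μ y‖, norm_nonneg (x - proxL2 μ y)]
    rw [← sub_eq_zero]
    exact norm_eq_zero.mp h1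
end

section
/- The proximal operator of the combined penalty Ω'(x) = γ‖x‖₂ + λ‖x‖₁ is the composition of the ℓ2 and ℓ1 proximal operators: for all y ∈ ℝⁿ, γ, λ > 0 and step μ > 0, argmin_x (1/2)‖x - y‖₂² + μγ‖x‖₂ + μλ‖x‖₁ = Prox_{μγ,ℓ2}(Prox_{μλ,ℓ1}(y)). -/
open scoped Classical

/-- Scalar soft-thresholding `sign(y) · (|y| - μ)₊`. -/
noncomputable def softThresh (μ y : ℝ) : ℝ := Real.sign y * max (|y| - μ) 0

/-- Coordinatewise soft-thresholding: the proximal operator of `μ‖·‖₁`. -/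
noncomputable def proxL1 {n : ℕ} (μ : ℝ) (y : EuclideanSpace ℝ (Fin n)) :
    EuclideanSpace ℝ (Fin n) :=
  WithLp.toLp 2 (fun i => softThresh μ (y i))

open scoped RealInnerProductSpace

lemma softThresh_abs_sub_le (b y : ℝ) (hb : 0 ≤ b) : |y - softThresh b y| ≤ b := by
  unfold softThresh
  rcases lt_trichotomy y 0 with h | h | h
  · rw [Real.sign_of_neg h, abs_of_neg h]
    rcases le_or_gt (-y - b) 0 with h2 | h2
    · rw [max_eq_right h2]; rw [abs_le]; constructor <;> nlinarith
    · rw [max_eq_left h2.le]; rw [abs_le]; constructor <;> nlinarith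
  · simp [h, hb]
  · rw [Real.sign_of_pos h, abs_of_pos h]
    rcases le_or_gt (y - b) 0 with h2 | h2
    · rw [max_eq_right h2]; rw [abs_le]; constructor <;> nlinarith
    · rw [max_eq_left h2.le]; rw [abs_le]; constructor <;> nlinarith

lemma softThresh_mul (b y : ℝ) : (y - softThresh b y) * softThresh b y = b * |softThresh b y| := by
  unfold softThresh
  rcases lt_trichotomy y 0 with h | h | h
  · rw [Real.sign_of_neg h, abs_of_neg h]
    rcases le_or_gt (-y - b) 0 with h2 | h2
    · rw [max_eq_right h2]; simp
    · rw [max_eq_left h2.le]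
      rw [abs_of_neg (by nlinarith : (-1 : ℝ) * (-y - b) < 0)]; ring
  · simp [h]
  · rw [Real.sign_of_pos h, abs_of_pos h]
    rcases le_or_gt (y - b) 0 with h2 | h2
    · rw [max_eq_right h2]; simp
    · rw [max_eq_left h2.le]
      rw [abs_of_pos (by nlinarith : (0:ℝ) < 1 * (y - b))]; ring





lemma proxL2_eq_smul {n : ℕ} (a : ℝ) (z : EuclideanSpace ℝ (Fin n)) :
    ∃ c : ℝ, 0 ≤ c ∧ proxL2 a z = c • z := by
  unfold proxL2
  by_cases hz : z = 0
  · exact ⟨0, le_refl 0, by simp [hz]⟩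
  · refine ⟨max (‖z‖ - a) 0 / ‖z‖, by positivity, by rw [if_neg hz]⟩

lemma proxL2_subgrad {n : ℕ} (a : ℝ) (ha : 0 ≤ a) (z x : EuclideanSpace ℝ (Fin n)) :
    a * ‖proxL2 a z‖ + ⟪z - proxL2 a z, x - proxL2 a z⟫ ≤ a * ‖x‖ := by
  unfold proxL2
  by_cases hz : z = 0
  · rw [if_pos hz]; simp [hz]; positivity
  · rw [if_neg hz]
    have hzn : 0 < ‖z‖ := norm_pos_iff.mpr hz
    have key : ⟪z, x⟫ ≤ ‖z‖ * ‖x‖ := real_inner_le_norm z x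
    rcases le_or_gt (‖z‖ - a) 0 with h2 | h2
    · rw [max_eq_right h2]
      simp only [zero_div, zero_smul, sub_zero, norm_zero, mul_zero, zero_add]
      nlinarith [norm_nonneg x]
    · rw [max_eq_left h2.le]
      set c : ℝ := (‖z‖ - a) / ‖z‖ with hc
      have hc0 : 0 ≤ c := by positivity
      have hnorm : ‖c • z‖ = ‖z‖ - a := by
        rw [norm_smul, Real.norm_of_nonneg hc0, hc]; field_simp
      have hinner : ⟪z - c • z, x - c • z⟫
          = (1 - c) * (⟪z, x⟫ - c * ‖z‖ ^ 2) := by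
        simp only [inner_sub_left, inner_sub_right, real_inner_smul_left,
          real_inner_smul_right]
        simp only [real_inner_self_eq_norm_sq]
        ring
      rw [hnorm, hinner]
      have e1 : 1 - c = a / ‖z‖ := by rw [hc]; field_simp; ring
      have e2 : c * ‖z‖ ^ 2 = (‖z‖ - a) * ‖z‖ := by rw [hc]; field_simp
      rw [e1, e2]
      have h3 : a / ‖z‖ * (⟪z, x⟫ - (‖z‖ - a) * ‖z‖)
          ≤ a / ‖z‖ * (‖z‖ * ‖x‖ - (‖z‖ - a) * ‖z‖) := by
        apply mul_le_mul_of_nonneg_left _ (by positivity)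
        linarith
      have h4 : a / ‖z‖ * (‖z‖ * ‖x‖ - (‖z‖ - a) * ‖z‖) = a * ‖x‖ - a * (‖z‖ - a) := by
        field_simp
      linarith

lemma l1_coord (b c x y : ℝ) (hb : 0 ≤ b) (hc : 0 ≤ c) :
    b * |c * softThresh b y| + (y - softThresh b y) * (x - c * softThresh b y) ≤ b * |x| := by
  set z := softThresh b y with hz
  have h1 : |y - z| ≤ b := softThresh_abs_sub_le b y hb
  have h2 : (y - z) * z = b * |z| := softThresh_mul b y
  have h3 : (y - z) * x ≤ b * |x| := by
    calc (y - z) * x ≤ |(y - z) * x| := le_abs_self _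
      _ = |y - z| * |x| := abs_mul _ _
      _ ≤ b * |x| := mul_le_mul_of_nonneg_right h1 (abs_nonneg x)
  have h4 : |c * z| = c * |z| := by rw [abs_mul, abs_of_nonneg hc]
  have h5 : (y - z) * (x - c * z) = (y - z) * x - c * ((y - z) * z) := by ring
  rw [h4, h5, h2]
  nlinarith

lemma subgrad_key {n : ℕ} (a b : ℝ) (ha : 0 < a) (hb : 0 < b)
    (y x : EuclideanSpace ℝ (Fin n)) :
    a * ‖proxL2 a (proxL1 b y)‖ + b * (∑ i, |proxL2 a (proxL1 b y) i|)
      + ⟪y - proxL2 a (proxL1 b y), x - proxL2 a (proxL1 b y)⟫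
      ≤ a * ‖x‖ + b * (∑ i, |x i|) := by
  set z := proxL1 b y with hzdef
  set p := proxL2 a z with hpdef
  obtain ⟨c, hc0, hcz⟩ := proxL2_eq_smul a z
  have hL2 := proxL2_subgrad a ha.le z x
  have hinner1 : ⟪y - z, x - p⟫ = ∑ i, (y i - z i) * (x i - p i) := by
    rw [PiLp.inner_apply]
    apply Finset.sum_congr rfl
    intro i _
    simp [RCLike.inner_apply]; ring
  have hL1 : b * (∑ i, |p i|) + ⟪y - z, x - p⟫ ≤ b * (∑ i, |x i|) := by
    rw [hinner1, Finset.mul_sum, Finset.mul_sum, ← Finset.sum_add_distrib]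
    apply Finset.sum_le_sum
    intro i _
    have hpz : p i = c * z i := by rw [hpdef, hcz]; rfl
    have hzi : z i = softThresh b (y i) := by simp [hzdef, proxL1]
    rw [hpz, hzi]
    exact l1_coord b c (x i) (y i) hb.le hc0
  have hsplit : ⟪y - p, x - p⟫ = ⟪y - z, x - p⟫ + ⟪z - p, x - p⟫ := by
    rw [← inner_add_left, sub_add_sub_cancel]
  linarith

lemma main_key {n : ℕ} (a b : ℝ) (ha : 0 < a) (hb : 0 < b)
    (y x : EuclideanSpace ℝ (Fin n)) :
    (1 / 2) * ‖proxL2 a (proxL1 b y) - y‖ ^ 2 + a * ‖proxL2 a (proxL1 b y)‖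
      + b * (∑ i, |proxL2 a (proxL1 b y) i|)
      + (1 / 2) * ‖x - proxL2 a (proxL1 b y)‖ ^ 2
      ≤ (1 / 2) * ‖x - y‖ ^ 2 + a * ‖x‖ + b * (∑ i, |x i|) := by
  set p := proxL2 a (proxL1 b y) with hpdef
  have hexp : ‖x - y‖ ^ 2 = ‖x - p‖ ^ 2 + 2 * ⟪x - p, p - y⟫ + ‖p - y‖ ^ 2 := by
    rw [← norm_add_sq_real, sub_add_sub_cancel]
  have hneg : ⟪x - p, p - y⟫ = -⟪y - p, x - p⟫ := by
    rw [real_inner_comm, show p - y = -(y - p) by abel, inner_neg_left]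
  have key := subgrad_key a b ha hb y x
  nlinarith [key, hexp, hneg]

theorem stmt_9 {n : ℕ} (μ γ lam : ℝ) (hμ : 0 < μ) (hγ : 0 < γ) (hlam : 0 < lam)
    (y : EuclideanSpace ℝ (Fin n)) :
    (∀ x : EuclideanSpace ℝ (Fin n),
      (1 / 2) * ‖proxL2 (μ * γ) (proxL1 (μ * lam) y) - y‖ ^ 2 +
          μ * γ * ‖proxL2 (μ * γ) (proxL1 (μ * lam) y)‖ +
          μ * lam * (∑ i, |proxL2 (μ * γ) (proxL1 (μ * lam) y) i|) ≤
        (1 / 2) * ‖x - y‖ ^ 2 + μ * γ * ‖x‖ + μ * lam * (∑ i, |x i|)) ∧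
    (∀ x : EuclideanSpace ℝ (Fin n),
      (1 / 2) * ‖x - y‖ ^ 2 + μ * γ * ‖x‖ + μ * lam * (∑ i, |x i|) =
        (1 / 2) * ‖proxL2 (μ * γ) (proxL1 (μ * lam) y) - y‖ ^ 2 +
          μ * γ * ‖proxL2 (μ * γ) (proxL1 (μ * lam) y)‖ +
          μ * lam * (∑ i, |proxL2 (μ * γ) (proxL1 (μ * lam) y) i|) →
      x = proxL2 (μ * γ) (proxL1 (μ * lam) y)) := by
  set p := proxL2 (μ * γ) (proxL1 (μ * lam) y) with hp
  constructor
  · intro x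
    have h := main_key (μ * γ) (μ * lam) (by positivity) (by positivity) y x
    nlinarith [sq_nonneg ‖x - p‖]
  · intro x hx
    have h := main_key (μ * γ) (μ * lam) (by positivity) (by positivity) y x
    have h2 : ‖x - p‖ ^ 2 ≤ 0 := by linarith
    have h0 : ‖x - p‖ = 0 := by nlinarith [norm_nonneg (x - p)]
    exact sub_eq_zero.mp (norm_eq_zero.mp h0)
end
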